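/- arXiv:1901.01090 — 3 statements merged into one kernel-verified Lean document; each statement's English description precedes it below -/
import Mathlib

section
/- For every simple graph G and all d, d' ≥ 1, the iterated fractionalization (G/d')/d is homomorphically equivalent to G/(d·d'), i.e., there exist graph homomorphisms in both directions between (G/d')/d and G/(d·d'). -/
open SimpleGraph

universe u v

/-- The join `G + H` of two simple graphs. -/
def graphJoin {α : Type u} {β : Type v} (G : SimpleGraph α) (H : SimpleGraph β) :
    SimpleGraph (α ⊕ β) where
  Adj x y :=
    match x, y with
    | Sum.inl a, Sum.inl a' => G.Adj a a'
    | Sum.inr b, Sum.inr b' => H.Adj b b'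
    | Sum.inl _, Sum.inr _ => True
    | Sum.inr _, Sum.inl _ => True
  symm := by
    constructor
    rintro (a | b) (a' | b') h
    · exact G.adj_symm h
    · trivial
    · trivial
    · exact H.adj_symm h
  loopless := by
    constructor
    rintro (a | b) h
    · exact G.loopless.irrefl a h
    · exact H.loopless.irrefl b h

/-- The disjunctive product `G * H`. -/
def disjProd {α : Type u} {β : Type v} (G : SimpleGraph α) (H : SimpleGraph β) :
    SimpleGraph (α × β) where
  Adj p q := G.Adj p.1 q.1 ∨ H.Adj p.2 q.2
  symm := ⟨fun p q h => h.imp (fun h' => G.adj_symm h') (fun h' => H.adj_symm h')⟩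
  loopless := ⟨fun p h => h.elim (fun h' => G.loopless.irrefl p.1 h') (fun h' => H.loopless.irrefl p.2 h')⟩

/-- The lexicographic product `G ⋉ H`. -/
def lexProd {α : Type u} {β : Type v} (G : SimpleGraph α) (H : SimpleGraph β) :
    SimpleGraph (α × β) where
  Adj p q := G.Adj p.1 q.1 ∨ (p.1 = q.1 ∧ H.Adj p.2 q.2)
  symm := ⟨fun p q h => h.imp (fun h' => G.adj_symm h') (fun h' => ⟨h'.1.symm, H.adj_symm h'.2⟩)⟩
  loopless := ⟨fun p h => h.elim (fun h' => G.loopless.irrefl p.1 h') (fun h' => H.loopless.irrefl p.2 h'.2)⟩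

/-- The `d`-fold blowup `G ⋉ d`, i.e. the lexicographic product `G ⋉ K_d`. -/
def blowup {α : Type u} (G : SimpleGraph α) (d : ℕ) : SimpleGraph (α × Fin d) :=
  lexProd G (⊤ : SimpleGraph (Fin d))

/-- The `d`-fractionalization `G/d`: the graph of `d`-cliques of `G`, with two
`d`-cliques adjacent iff they are disjoint and pairwise adjacent. -/
def fracGraph {α : Type u} (G : SimpleGraph α) (d : ℕ) :
    SimpleGraph {S : Finset α // S.card = d ∧ G.IsClique (S : Set α)} where
  Adj S T := S ≠ T ∧ Disjoint S.val T.val ∧ ∀ a ∈ S.val, ∀ b ∈ T.val, G.Adj a b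
  symm := by
    constructor
    rintro S T ⟨hne, hd, hadj⟩
    exact ⟨hne.symm, hd.symm, fun b hb a ha => (hadj a ha b hb).symm⟩
  loopless := ⟨fun S h => h.1 rfl⟩

/-- The `n`-fold disjunctive power `G^{*n}`. -/
def disjPow {α : Type u} (G : SimpleGraph α) (n : ℕ) :
    SimpleGraph (Fin n → α) where
  Adj f g := ∃ i, G.Adj (f i) (g i)
  symm := ⟨fun f g ⟨i, h⟩ => ⟨i, h.symm⟩⟩
  loopless := ⟨fun f ⟨i, h⟩ => G.loopless.irrefl _ h⟩

/-- A semiring family of graphs. -/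
structure SemiringFamily where
  V : ℕ → Type u
  F : ∀ n, SimpleGraph (V n)
  isEmpty_zero : IsEmpty (V 0)
  nonempty_one : Nonempty (V 1)
  add_hom : ∀ n m : ℕ, Nonempty (graphJoin (F n) (F m) →g F (n + m))
  mul_hom : ∀ n m : ℕ, Nonempty (disjProd (F n) (F m) →g F (n * m))

/-- The `F`-number: the least `n` such that `G → F_n`. -/
noncomputable def etaF (F : SemiringFamily.{u}) {α : Type v} (G : SimpleGraph α) : ℕ :=
  sInf {n : ℕ | Nonempty (G →g F.F n)}

/-- The fractional `F`-number. -/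
noncomputable def etaFrac (F : SemiringFamily.{u}) {α : Type v} (G : SimpleGraph α) : ℝ :=
  sInf {x : ℝ | ∃ n d : ℕ, 1 ≤ d ∧ Nonempty (G →g fracGraph (F.F n) d) ∧ x = (n : ℝ) / d}

/-- The asymptotic `F`-number. -/
noncomputable def etaAsymp (F : SemiringFamily.{u}) {α : Type v} (G : SimpleGraph α) : ℝ :=
  sInf {x : ℝ | ∃ n : ℕ, 1 ≤ n ∧ x = (etaF F (disjPow G n) : ℝ) ^ ((1 : ℝ) / n)}

/-- The orthogonal complement of a set of vertices. -/
def perp {α : Type u} (G : SimpleGraph α) (S : Set α) : Set α :=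
  {v | ∀ s ∈ S, G.Adj v s}

/-- A flat is a set of vertices with `S^{⊥⊥} = S`. -/
def IsFlat {α : Type u} (G : SimpleGraph α) (S : Set α) : Prop :=
  perp G (perp G S) = S

/-- Homomorphic equivalence of two graphs. -/
def HomEquiv {α : Type u} {β : Type v} (G : SimpleGraph α) (H : SimpleGraph β) : Prop :=
  Nonempty (G →g H) ∧ Nonempty (H →g G)

/-- A linear-like semiring family: every flat of `F_n` induces a subgraph with some
clique number `k`, homomorphically equivalent to `F_k`. -/
structure LinearLikeFamily extends SemiringFamily where
  linearLike : ∀ n (S : Set (V n)), IsFlat (F n) S →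
    ∃ k : ℕ, (∃ s : Finset S, ((F n).induce S).IsNClique k s) ∧
      (∀ s : Finset S, ¬ ((F n).induce S).IsNClique (k + 1) s) ∧
      HomEquiv ((F n).induce S) (F k)

/-!
A `d`-clique of `d'`-cliques of `G` that are pairwise disjoint and completely joined is, by
taking the union, a `d d'`-clique of `G`; conversely, any partition of a `d d'`-clique into `d`
blocks of size `d'` gives a `d`-clique of `G/d'`. Both maps preserve adjacency, since adjacency
of vertices of a fractionalization only asks that all cross pairs be adjacent in `G`.
-/

theorem Finpartition.exists_card_parts_eq {α : Type*} [DecidableEq α] {s : Finset α}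
    {n m : ℕ} (hm : m ≠ 0) (hs : s.card = n * m) :
    ∃ P : Finpartition s, P.parts.card = n ∧ ∀ t ∈ P.parts, t.card = m := by
  have hs' : n * m + 0 * (m + 1) = s.card := by rw [hs, zero_mul, add_zero]
  set P := (⊥ : Finpartition s).equitabilise hs'
  have hbig := (⊥ : Finpartition s).card_filter_equitabilise_big hs'
  refine ⟨P, by simpa using (⊥ : Finpartition s).card_parts_equitabilise hs' hm, fun t ht => ?_⟩
  refine (Finpartition.card_eq_of_mem_parts_equitabilise ht).resolve_right fun htm => ?_
  rw [Finset.card_eq_zero, Finset.filter_eq_empty_iff] at hbig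
  exact hbig ht htm

namespace fracGraph

variable {α : Type u} {G : SimpleGraph α} {d d' : ℕ}

theorem adj_iff {S T : {S : Finset α // S.card = d ∧ G.IsClique (S : Set α)}} :
    (fracGraph G d).Adj S T ↔ 0 < d ∧ ∀ a ∈ S.val, ∀ b ∈ T.val, G.Adj a b := by
  refine ⟨fun ⟨hne, _, hST⟩ => ⟨Nat.pos_of_ne_zero fun hd => hne ?_, hST⟩,
    fun ⟨hd, hST⟩ => ?_⟩
  · exact Subtype.ext <| by rw [Finset.card_eq_zero.1 (S.2.1.trans hd),
      Finset.card_eq_zero.1 (T.2.1.trans hd)]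
  · have hdisj : Disjoint S.val T.val :=
      Finset.disjoint_left.2 fun a haS haT => G.loopless.irrefl a (hST a haS a haT)
    obtain ⟨a, ha⟩ := Finset.card_pos.1 (S.2.1 ▸ hd)
    exact ⟨fun h => Finset.disjoint_left.1 hdisj ha (h ▸ ha), hdisj, hST⟩

variable (G d d')

def biUnionHom [DecidableEq α] : fracGraph (fracGraph G d') d →g fracGraph G (d * d') where
  toFun S := ⟨S.val.biUnion Subtype.val, by
      rw [Finset.card_biUnion fun A hA B hB hAB => (S.2.2 hA hB hAB).2.1,
        Finset.sum_congr rfl fun A _ => A.2.1, Finset.sum_const, S.2.1, smul_eq_mul], by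
      intro a ha b hb hab
      obtain ⟨A, hA, haA⟩ := Finset.mem_biUnion.1 ha
      obtain ⟨B, hB, hbB⟩ := Finset.mem_biUnion.1 hb
      obtain rfl | hAB := eq_or_ne A B
      · exact A.2.2 haA hbB hab
      · exact (adj_iff.1 (S.2.2 hA hB hAB)).2 a haA b hbB⟩
  map_rel' {S T} hST := by
    obtain ⟨hd, hST⟩ := adj_iff.1 hST
    obtain ⟨A, hA⟩ := Finset.card_pos.1 (S.2.1 ▸ hd)
    obtain ⟨B, hB⟩ := Finset.card_pos.1 (T.2.1 ▸ hd)
    refine adj_iff.2 ⟨Nat.mul_pos hd (adj_iff.1 (hST A hA B hB)).1, fun a ha b hb => ?_⟩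
    obtain ⟨A, hA, haA⟩ := Finset.mem_biUnion.1 ha
    obtain ⟨B, hB, hbB⟩ := Finset.mem_biUnion.1 hb
    exact (adj_iff.1 (hST A hA B hB)).2 a haA b hbB

theorem nonempty_hom_fracGraph_fracGraph (hd' : d' ≠ 0) :
    Nonempty (fracGraph G (d * d') →g fracGraph (fracGraph G d') d) := by
  classical
  choose P hcard hparts using fun U : {U : Finset α // U.card = d * d' ∧ G.IsClique (U : Set α)} =>
    Finpartition.exists_card_parts_eq hd' U.2.1
  have hblock : ∀ U, ∀ t ∈ (P U).parts, t.card = d' ∧ G.IsClique (t : Set α) :=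
    fun U t ht => ⟨hparts U t ht, U.2.2.subset (Finset.coe_subset.2 ((P U).le ht))⟩
  refine ⟨⟨fun U => ⟨(P U).parts.subtype _, ?_, ?_⟩, fun {U U'} hUU' => ?_⟩⟩
  · rw [Finset.card_subtype, Finset.filter_true_of_mem (hblock U), hcard]
  · intro A hA B hB hAB
    rw [Finset.mem_coe, Finset.mem_subtype] at hA hB
    have hdisj := (P U).disjoint hA hB (Subtype.val_injective.ne hAB)
    exact adj_iff.2 ⟨Nat.pos_of_ne_zero hd', fun a ha b hb => U.2.2 ((P U).le hA ha)
      ((P U).le hB hb) fun hab => Finset.disjoint_left.1 hdisj ha (hab ▸ hb)⟩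
  · obtain ⟨hdd', hUU'⟩ := adj_iff.1 hUU'
    refine adj_iff.2 ⟨Nat.pos_of_mul_pos_right hdd', fun A hA B hB => ?_⟩
    rw [Finset.mem_subtype] at hA hB
    exact adj_iff.2 ⟨Nat.pos_of_ne_zero hd', fun a ha b hb => hUU' a ((P U).le hA ha) b
      ((P U').le hB hb)⟩

end fracGraph

theorem fracGraph_fracGraph_homEquiv_general {α : Type u} (G : SimpleGraph α) (d d' : ℕ)
    (hd' : 1 ≤ d') :
    HomEquiv (fracGraph (fracGraph G d') d) (fracGraph G (d * d')) := by
  classical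
  exact ⟨⟨fracGraph.biUnionHom G d d'⟩,
    fracGraph.nonempty_hom_fracGraph_fracGraph G d d' (Nat.one_le_iff_ne_zero.1 hd')⟩

/-- Iterated fractionalization `(G/d')/d` is homomorphically equivalent to `G/(d·d')`. -/
theorem fracGraph_fracGraph_homEquiv {α : Type u} (G : SimpleGraph α) (d d' : ℕ)
    (hd : 1 ≤ d) (hd' : 1 ≤ d') :
    HomEquiv (fracGraph (fracGraph G d') d) (fracGraph G (d * d')) :=
  fracGraph_fracGraph_homEquiv_general G d d' hd'
end

section
/- Let (F_n) be a semiring family of graphs. Then for all n, d, m ≥ 1 there exists a graph homomorphism F_n/d → F_{m·n}/(m·d) ('common denominators' can be taken). -/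
open SimpleGraph

universe u v

/-!
Induction on `m`. Given `φ : F_n/d → F_{mn}/(md)`, the map `S ↦ φ(S) ⊔ S` sends a `d`-clique of
`F_n` to an `(md + d)`-clique of the join `F_{mn} + F_n`, adjacent cliques to adjacent ones; the
homomorphism `F_{mn} + F_n → F_{(m+1)n}` of the semiring family carries it on to `F_{(m+1)n}`, and
homomorphisms act on fractionalizations cliquewise.
-/

namespace SimpleGraph

variable {α β γ : Type*} {G : SimpleGraph α} {H : SimpleGraph β}

theorem Hom.injOn_of_isClique (φ : G →g H) {s : Set α} (hs : G.IsClique s) : Set.InjOn φ s :=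
  fun _ hx _ hy hxy => by_contra fun hne => (φ.map_adj (hs hx hy hne)).ne hxy

theorem Hom.isClique_image (φ : G →g H) {s : Set α} (hs : G.IsClique s) : H.IsClique (φ '' s) := by
  rintro _ ⟨x, hx, rfl⟩ _ ⟨y, hy, rfl⟩ hne
  exact φ.map_adj (hs hx hy fun h => hne (h ▸ rfl))

theorem isClique_graphJoin_disjSum {s : Finset α} {t : Finset β} (hs : G.IsClique (s : Set α))
    (ht : H.IsClique (t : Set β)) : (graphJoin G H).IsClique (s.disjSum t : Set (α ⊕ β)) := by
  rintro (a | b) hx (a' | b') hy hne <;> simp only [Finset.mem_coe, Finset.inl_mem_disjSum,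
    Finset.inr_mem_disjSum] at hx hy
  · exact hs hx hy fun h => hne (h ▸ rfl)
  · trivial
  · trivial
  · exact ht hx hy fun h => hne (h ▸ rfl)

namespace fracGraph

variable {d e : ℕ}

theorem nonempty_of_adj {S T : {S : Finset α // S.card = d ∧ G.IsClique (S : Set α)}}
    (h : (fracGraph G d).Adj S T) : S.val.Nonempty := by
  rw [Finset.nonempty_iff_ne_empty]
  intro hS
  have hT : T.val = ∅ := by rw [← Finset.card_eq_zero, T.2.1, ← S.2.1, hS, Finset.card_empty]
  exact h.1 (Subtype.ext (hS.trans hT.symm))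

/-- The cross adjacencies force the image cliques to be disjoint, hence distinct, as they are
nonempty. -/
def homMk {K : SimpleGraph γ} (f : γ → Finset β) (card_eq : ∀ x, (f x).card = e)
    (isClique : ∀ x, H.IsClique (f x : Set β))
    (nonempty : ∀ ⦃x y⦄, K.Adj x y → (f x).Nonempty)
    (adj : ∀ ⦃x y⦄, K.Adj x y → ∀ a ∈ f x, ∀ b ∈ f y, H.Adj a b) :
    K →g fracGraph H e where
  toFun x := ⟨f x, card_eq x, isClique x⟩
  map_rel' {x y} hxy := by
    have hdisj : Disjoint (f x) (f y) :=
      Finset.disjoint_left.mpr fun a ha ha' => (adj hxy a ha a ha').ne rfl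
    refine ⟨fun h => ?_, hdisj, adj hxy⟩
    obtain ⟨a, ha⟩ := nonempty hxy
    have hfy : f y = f x := (congrArg Subtype.val h).symm
    exact Finset.disjoint_left.mp hdisj ha (hfy ▸ ha)

def map [DecidableEq β] (φ : G →g H) (d : ℕ) : fracGraph G d →g fracGraph H d :=
  homMk (fun S => S.val.image φ)
    (fun S => (Finset.card_image_of_injOn (φ.injOn_of_isClique S.2.2)).trans S.2.1)
    (fun S => by simpa only [Finset.coe_image] using φ.isClique_image S.2.2)
    (fun _ _ h => (nonempty_of_adj h).image φ)
    (fun _ _ h => by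
      simp only [Finset.mem_image, forall_exists_index, and_imp, forall_apply_eq_imp_iff₂]
      exact fun a ha b hb => φ.map_adj (h.2.2 a ha b hb))

def joinHom (φ : fracGraph G d →g fracGraph H e) :
    fracGraph G d →g fracGraph (graphJoin H G) (e + d) :=
  homMk (fun S => (φ S).val.disjSum S.val)
    (fun S => by rw [Finset.card_disjSum, (φ S).2.1, S.2.1])
    (fun S => isClique_graphJoin_disjSum (φ S).2.2 S.2.2)
    (fun _ _ h =>
      let ⟨a, ha⟩ := nonempty_of_adj h
      ⟨Sum.inr a, Finset.inr_mem_disjSum.mpr ha⟩)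
    (fun _ _ h => by
      rintro (a | b) ha (a' | b') hb <;> simp only [Finset.inl_mem_disjSum,
        Finset.inr_mem_disjSum] at ha hb
      · exact (φ.map_adj h).2.2 a ha a' hb
      · trivial
      · trivial
      · exact h.2.2 b ha b' hb)

end fracGraph

end SimpleGraph

theorem fracGraph_common_denominator_general (F : SemiringFamily.{u}) (n d m : ℕ)
    (hm : 1 ≤ m) :
    Nonempty (fracGraph (F.F n) d →g fracGraph (F.F (m * n)) (m * d)) := by
  classical
  induction m, hm using Nat.le_induction with
  | base => rw [one_mul, one_mul]; exact ⟨Hom.id⟩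
  | succ m _ ih =>
    obtain ⟨φ⟩ := ih
    obtain ⟨ψ⟩ := F.add_hom (m * n) n
    rw [Nat.succ_mul, Nat.succ_mul]
    exact ⟨(fracGraph.map ψ _).comp (fracGraph.joinHom φ)⟩

/-- Common denominators: for a semiring family, `F_n/d → F_{m·n}/(m·d)`. -/
theorem fracGraph_common_denominator (F : SemiringFamily.{u}) (n d m : ℕ)
    (hn : 1 ≤ n) (hd : 1 ≤ d) (hm : 1 ≤ m) :
    Nonempty (fracGraph (F.F n) d →g fracGraph (F.F (m * n)) (m * d)) :=
  fracGraph_common_denominator_general F n d m hm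
end

section
/- Let (F_n) be a linear-like semiring family of graphs. Then for every n ∈ ℕ, the graph F_n contains a clique of size n but no clique of size n + 1; that is, its clique number equals n. -/
open SimpleGraph

universe u v

/-!
Taking the flat `Set.univ` of `F_n`, linear-likeness gives a `k` such that `F_n` has clique
number `k` and `F_k → F_n`, so `F_k` has no `(k+1)`-clique. Joining with copies of `F_1`
shows that `F_{a+c}` contains a `(b+c)`-clique whenever `F_a` contains a `b`-clique. With
`a = b = 0` this puts an `n`-clique in `F_n`, so `n ≤ k`; with `a = n`, `b = k` it puts a
`(2k-n)`-clique in `F_k`, so `k ≤ n`.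
-/

namespace SimpleGraph

variable {α β : Type*} {G : SimpleGraph α} {H : SimpleGraph β} {a b n : ℕ}

theorem CliqueFree.of_hom (f : G →g H) (h : H.CliqueFree n) : G.CliqueFree n := by
  intro s hs
  obtain ⟨e⟩ := (not_cliqueFree_iff_top_isContained n).1 fun hG => hG s hs
  exact IsContained.not_cliqueFree
    ⟨(f.comp e.toHom).toCopy (Hom.injective_of_top_hom _)⟩ h

theorem IsNClique.graphJoin {s : Finset α} {t : Finset β} (hs : G.IsNClique a s)
    (ht : H.IsNClique b t) : (graphJoin G H).IsNClique (a + b) (s.disjSum t) := by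
  refine ⟨?_, by rw [Finset.card_disjSum, hs.card_eq, ht.card_eq]⟩
  rintro (x | x) hx (y | y) hy hxy <;>
    simp only [Finset.mem_coe, Finset.inl_mem_disjSum, Finset.inr_mem_disjSum] at hx hy
  · exact hs.isClique hx hy fun h => hxy (congrArg Sum.inl h)
  · trivial
  · trivial
  · exact ht.isClique hx hy fun h => hxy (congrArg Sum.inr h)

theorem not_cliqueFree_graphJoin (hG : ¬G.CliqueFree a) (hH : ¬H.CliqueFree b) :
    ¬(graphJoin G H).CliqueFree (a + b) := by
  simp only [CliqueFree, not_forall, not_not] at hG hH ⊢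
  obtain ⟨s, hs⟩ := hG
  obtain ⟨t, ht⟩ := hH
  exact ⟨_, hs.graphJoin ht⟩

theorem isFlat_univ (G : SimpleGraph α) : IsFlat G Set.univ := by
  have h : perp G Set.univ = ∅ :=
    Set.eq_empty_of_forall_notMem fun v hv => G.loopless.irrefl v (hv v trivial)
  rw [IsFlat, h]
  ext v
  simp [perp]

end SimpleGraph

namespace SemiringFamily

theorem not_cliqueFree_add (F : SemiringFamily.{u}) {a b : ℕ} (h : ¬(F.F a).CliqueFree b) :
    ∀ c, ¬(F.F (a + c)).CliqueFree (b + c)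
  | 0 => h
  | c + 1 => by
    obtain ⟨v⟩ := F.nonempty_one
    obtain ⟨φ⟩ := F.add_hom (a + c) 1
    have hF₁ : ¬(F.F 1).CliqueFree 1 := fun hfree => hfree {v} (isNClique_singleton.2 rfl)
    exact fun hfree => not_cliqueFree_graphJoin (F.not_cliqueFree_add h c) hF₁ (hfree.of_hom φ)

theorem not_cliqueFree_self (F : SemiringFamily.{u}) (n : ℕ) : ¬(F.F n).CliqueFree n := by
  have h := F.not_cliqueFree_add (a := 0) not_cliqueFree_zero n
  rwa [Nat.zero_add] at h

end SemiringFamily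

/-- For a linear-like semiring family, `F_n` has clique number exactly `n`. -/
theorem linearLike_cliqueNum (F : LinearLikeFamily.{u}) (n : ℕ) :
    (∃ s : Finset (F.V n), (F.F n).IsNClique n s) ∧
      ∀ s : Finset (F.V n), ¬ (F.F n).IsNClique (n + 1) s := by
  obtain ⟨k, ⟨s, hs⟩, hfree, -, ⟨g⟩⟩ := F.linearLike n Set.univ (isFlat_univ _)
  have hFn : (F.F n).CliqueFree (k + 1) := CliqueFree.of_hom (induceUnivIso _).symm.toHom hfree
  have hFk : (F.F k).CliqueFree (k + 1) := CliqueFree.of_hom g hfree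
  have hk : ¬(F.F n).CliqueFree k := fun h => h.of_hom (induceUnivIso _).toHom s hs
  have hn := F.not_cliqueFree_self n
  have hnk : n ≤ k := by
    by_contra
    exact hn (hFn.mono (by omega))
  have hkn : k ≤ n := by
    by_contra
    have hbig := F.not_cliqueFree_add hk (k - n)
    rw [Nat.add_sub_cancel' hnk] at hbig
    exact hbig (hFk.mono (by omega))
  obtain rfl := le_antisymm hkn hnk
  exact ⟨by simpa [CliqueFree] using hn, hFn⟩
end
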